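/- arXiv:2405.21047 — 2 statements merged into one kernel-verified Lean document; each statement's English description precedes it below -/
import Mathlib

section
/- Consequently, c̃_S(w_{1:i}) − c(w_{1:i}) ≤ Σ_{w_{1:j} ∈ X_S(w_{1:i})} P(w_{i+1:j} | w_{1:i}) ≤ P( the completion of w_{1:i} sampled from P reaches some prefix in X_S(w_{1:i}) ). In particular, if every string of L extending w_{1:i} is in S, then c̃_S(w_{1:i}) = c(w_{1:i}). -/
open scoped BigOperators
open Finset Filter

namespace GAD

/-- Marginal probability of the prefix `u` under a distribution `P` on length-`n` strings. -/
noncomputable def marg {α : Type*} [Fintype α] (n : ℕ) (P : List α → ℝ) (u : List α) : ℝ :=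
  ∑ v : Fin (n - u.length) → α, P (u ++ List.ofFn v)

/-- Marginal probability mass of completions of `u` that land in the language `L`. -/
noncomputable def margL {α : Type*} [Fintype α] (n : ℕ) (P : List α → ℝ) (L : Set (List α))
    (u : List α) : ℝ :=
  ∑ v : Fin (n - u.length) → α, L.indicator P (u ++ List.ofFn v)

/-- Next-token conditional `P(a | u)`. -/
noncomputable def cond {α : Type*} [Fintype α] (n : ℕ) (P : List α → ℝ) (u : List α) (a : α) : ℝ :=
  marg n P (u ++ [a]) / marg n P u

/-- Expected future grammaticality `c(u) = Σ_v P(v | u) · 1[u ++ v ∈ L]`. -/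
noncomputable def efg {α : Type*} [Fintype α] (n : ℕ) (P : List α → ℝ) (L : Set (List α))
    (u : List α) : ℝ :=
  margL n P L u / marg n P u

/-- `u` is a prefix of some string of the language `L`. -/
def inPrefix {α : Type*} (L : Set (List α)) (u : List α) : Prop := ∃ v, u ++ v ∈ L

/-- Total probability mass of the language: `P(L)`. -/
noncomputable def PL {α : Type*} [Fintype α] (n : ℕ) (P : List α → ℝ) (L : Set (List α)) : ℝ :=
  margL n P L []

open Classical in
/-- ASAp approximation of expected future grammaticality, with fuel = remaining length. -/
noncomputable def ctildeAux {α : Type*} [Fintype α] (n : ℕ) (P : List α → ℝ) (L : Set (List α))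
    (S : Finset (List α)) : ℕ → List α → ℝ
  | 0, u => Set.indicator L (fun _ => (1 : ℝ)) u
  | (k + 1), u =>
      if ∃ s ∈ S, u <+: s then
        ∑ a : α, cond n P u a * ctildeAux n P L S k (u ++ [a])
      else Set.indicator {t | inPrefix L t} (fun _ => (1 : ℝ)) u

/-- ASAp overapproximation `c̃_S`. -/
noncomputable def ctilde {α : Type*} [Fintype α] (n : ℕ) (P : List α → ℝ) (L : Set (List α))
    (S : Finset (List α)) (u : List α) : ℝ :=
  ctildeAux n P L S (n - u.length) u

/-- The antichain of shortest extensions of `u` lying in `L_prefix` that are not prefixes of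
any previously sampled string in `S` (every proper extension-prefix between `u` and `t`
is a prefix of some sample). -/
def XS {α : Type*} (L : Set (List α)) (S : Finset (List α)) (u : List α) : Set (List α) :=
  {t | u <+: t ∧ inPrefix L t ∧ (¬ ∃ s ∈ S, t <+: s) ∧
       ∀ t', u <+: t' → t' <+: t → t' ≠ t → ∃ s ∈ S, t' <+: s}

/-!
On every prefix of a sample, `ctilde` and `efg` obey the same one-step recursion
`x u = ∑ a, P(a | u) * x (u ++ [a])`, and at full length both are the indicator of `L`. They can
only part ways at the first prefixes leaving the sampled tree, where `ctilde` jumps to `1` while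
`efg ≥ 0`; these prefixes are exactly `X_S(u)`, so unrolling the recursion bounds the gap by
`∑ t ∈ X_S(u), P(t | u)`. As `X_S(u)` is an antichain for `<+:`, each completion of `u` passes
through at most one of its elements, which turns that sum into the probability of reaching
`X_S(u)`. If every string of `L` extending `u` is sampled, no prefix of `L` leaves the tree, and
the two recursions coincide.
-/

section

variable {α : Type*} {n : ℕ} {P : List α → ℝ} {L : Set (List α)} {S : Finset (List α)}
  {u : List α}

theorem induction_on_remaining_length {p : List α → Prop}
    (base : ∀ u : List α, n ≤ u.length → p u)
    (step : ∀ u : List α, u.length < n → (∀ a, p (u ++ [a])) → p u) (u : List α) :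
    p u := by
  obtain ⟨k, hk⟩ : ∃ k, n - u.length = k := ⟨_, rfl⟩
  induction k generalizing u with
  | zero => exact base u (by omega)
  | succ k ih => exact step u (by omega) fun a => ih _ (by simp; omega)

section Antichain

theorem eq_of_snoc_isPrefix {a b : α} {t : List α} (ha : u ++ [a] <+: t) (hb : u ++ [b] <+: t) :
    a = b := by
  have h : u ++ [a] = u ++ [b] :=
    (List.prefix_of_prefix_length_le ha hb (by simp)).eq_of_length (by simp)
  simpa using h

theorem XS_eq_empty_of_not_inPrefix (hu : ¬ inPrefix L u) : XS L S u = ∅ := by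
  refine Set.eq_empty_of_forall_notMem ?_
  rintro t ⟨⟨r, rfl⟩, ⟨w, hw⟩, -, -⟩
  exact hu ⟨r ++ w, by rwa [← List.append_assoc]⟩

theorem XS_eq_singleton_self (hs : ¬ ∃ s ∈ S, u <+: s) (hu : inPrefix L u) :
    XS L S u = {u} := by
  ext t
  constructor
  · rintro ⟨hut, -, -, hbetween⟩
    by_contra hne
    exact hs (hbetween u (List.prefix_refl u) hut fun h => hne h.symm)
  · rintro rfl
    exact ⟨List.prefix_refl t, hu, hs, fun t' ht' ht't hne =>
      absurd (ht't.eq_of_length (le_antisymm ht't.length_le ht'.length_le)) hne⟩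

theorem length_le_of_mem_XS (hL : ∀ w ∈ L, w.length = n) {t : List α} (ht : t ∈ XS L S u) :
    t.length ≤ n := by
  obtain ⟨w, hw⟩ := ht.2.1
  have := hL _ hw
  simp only [List.length_append] at this
  omega

theorem XS_finite [Finite α] (hL : ∀ w ∈ L, w.length = n) : (XS L S u).Finite :=
  (List.finite_length_le α n).subset fun _ ht => length_le_of_mem_XS hL ht

theorem XS_eq_empty_of_le_length (hL : ∀ w ∈ L, w.length = n) (hs : ∃ s ∈ S, u <+: s)
    (h : n ≤ u.length) : XS L S u = ∅ := by
  refine Set.eq_empty_of_forall_notMem fun t ht => ?_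
  have htn := length_le_of_mem_XS hL ht
  have hut := ht.1.length_le
  exact ht.2.2.1 (ht.1.eq_of_length (by omega) ▸ hs)

theorem XS_eq_iUnion_snoc (hs : ∃ s ∈ S, u <+: s) : XS L S u = ⋃ a, XS L S (u ++ [a]) := by
  ext t
  simp only [Set.mem_iUnion]
  constructor
  · rintro ⟨hut, hpre, hfresh, hbetween⟩
    have hlt : u.length < t.length :=
      lt_of_le_of_ne hut.length_le fun e => hfresh (hut.eq_of_length e ▸ hs)
    refine ⟨_, List.concat_get_prefix hut hlt, hpre, hfresh, fun t' ht' => ?_⟩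
    exact hbetween t' ((u.prefix_append _).trans ht')
  · rintro ⟨a, huat, hpre, hfresh, hbetween⟩
    refine ⟨(u.prefix_append [a]).trans huat, hpre, hfresh, fun t' hut' ht't hne => ?_⟩
    rcases List.prefix_or_prefix_of_prefix ht't huat with ht'ua | huat'
    · rcases List.prefix_concat_iff.mp ht'ua with rfl | ht'u
      · exact hbetween _ (List.prefix_refl _) ht't hne
      · exact ht'u.eq_of_length (le_antisymm ht'u.length_le hut'.length_le) ▸ hs
    · exact hbetween t' huat' ht't hne

theorem pairwise_disjoint_XS_snoc :
    Pairwise fun a b : α => Disjoint (XS L S (u ++ [a])) (XS L S (u ++ [b])) :=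
  fun _ _ hab => Set.disjoint_left.mpr fun _ ha hb => hab (eq_of_snoc_isPrefix ha.1 hb.1)

theorem exists_mem_XS_isPrefix_iff_snoc (hs : ∃ s ∈ S, u <+: s) {a : α} {x : List α}
    (hx : u ++ [a] <+: x) :
    (∃ t ∈ XS L S u, t <+: x) ↔ ∃ t ∈ XS L S (u ++ [a]), t <+: x := by
  rw [XS_eq_iUnion_snoc hs]
  simp only [Set.mem_iUnion]
  constructor
  · rintro ⟨t, ⟨b, hb⟩, htx⟩
    exact ⟨t, eq_of_snoc_isPrefix (hb.1.trans htx) hx ▸ hb, htx⟩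
  · rintro ⟨t, ht, htx⟩
    exact ⟨t, ⟨a, ht⟩, htx⟩

end Antichain

variable [Fintype α]

section Marginals

theorem sum_completions_of_le_length (Q : List α → ℝ) (h : n ≤ u.length) :
    ∑ v : Fin (n - u.length) → α, Q (u ++ List.ofFn v) = Q u := by
  rw [Nat.sub_eq_zero_of_le h]
  simp

theorem sum_completions_eq_sum_snoc (Q : List α → ℝ) (h : u.length < n) :
    ∑ v : Fin (n - u.length) → α, Q (u ++ List.ofFn v) =
      ∑ a : α, ∑ v : Fin (n - (u ++ [a]).length) → α, Q (u ++ [a] ++ List.ofFn v) := by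
  have hlen : ∀ a : α, n - (u ++ [a]).length = n - (u.length + 1) := by simp
  rw [show n - u.length = n - (u.length + 1) + 1 by omega,
    ← (Fin.consEquiv fun _ => α).sum_comp, Fintype.sum_prod_type]
  refine Finset.sum_congr rfl fun a _ => ?_
  rw [hlen a]
  simp [List.ofFn_succ, Fin.cons]

theorem marg_of_le_length (h : n ≤ u.length) : marg n P u = P u :=
  sum_completions_of_le_length P h

theorem margL_eq_sum_snoc (h : u.length < n) :
    margL n P L u = ∑ a : α, margL n P L (u ++ [a]) :=
  sum_completions_eq_sum_snoc _ h

theorem marg_nonneg (hP : ∀ w, 0 ≤ P w) (u : List α) : 0 ≤ marg n P u :=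
  Finset.sum_nonneg fun _ _ => hP _

theorem efg_nonneg (hP : ∀ w, 0 ≤ P w) (u : List α) : 0 ≤ efg n P L u :=
  div_nonneg (Finset.sum_nonneg fun _ _ => Set.indicator_nonneg (fun w _ => hP w) _)
    (marg_nonneg hP u)

theorem cond_nonneg (hP : ∀ w, 0 ≤ P w) (u : List α) (a : α) : 0 ≤ cond n P u a :=
  div_nonneg (marg_nonneg hP _) (marg_nonneg hP u)

theorem cond_mul_div_marg_snoc {a : α} (ha : marg n P (u ++ [a]) ≠ 0) (x : ℝ) :
    cond n P u a * (x / marg n P (u ++ [a])) = x / marg n P u := by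
  unfold cond
  field_simp

theorem efg_of_le_length (hL : ∀ w ∈ L, w.length = n)
    (hmarg : ∀ v : List α, v.length ≤ n → 0 < marg n P v) (h : n ≤ u.length) :
    efg n P L u = L.indicator (fun _ => 1) u := by
  unfold efg margL
  rw [sum_completions_of_le_length _ h, marg_of_le_length h]
  by_cases hu : u ∈ L
  · have hPu : P u ≠ 0 := by
      rw [← marg_of_le_length (P := P) h]
      exact (hmarg u (hL u hu).le).ne'
    simp [hu, hPu]
  · simp [hu]

theorem efg_eq_sum_cond_mul_snoc (hmarg : ∀ v : List α, v.length ≤ n → 0 < marg n P v)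
    (h : u.length < n) :
    efg n P L u = ∑ a : α, cond n P u a * efg n P L (u ++ [a]) := by
  unfold efg
  rw [margL_eq_sum_snoc h, Finset.sum_div]
  refine Finset.sum_congr rfl fun a _ => ?_
  rw [cond_mul_div_marg_snoc (hmarg _ (by simpa using h)).ne']

theorem efg_eq_zero_of_not_inPrefix (hu : ¬ inPrefix L u) : efg n P L u = 0 := by
  unfold efg margL
  rw [Finset.sum_eq_zero fun v _ => Set.indicator_of_notMem (fun hv => hu ⟨_, hv⟩) P, zero_div]

end Marginals

section ASAp

theorem ctilde_of_le_length (h : n ≤ u.length) :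
    ctilde n P L S u = L.indicator (fun _ => 1) u := by
  rw [ctilde, Nat.sub_eq_zero_of_le h, ctildeAux]

theorem ctilde_of_isPrefix_sample (h : u.length < n) (hs : ∃ s ∈ S, u <+: s) :
    ctilde n P L S u = ∑ a : α, cond n P u a * ctilde n P L S (u ++ [a]) := by
  have hlen : ∀ a : α, n - (u ++ [a]).length = n - (u.length + 1) := by simp
  rw [ctilde, show n - u.length = n - (u.length + 1) + 1 by omega, ctildeAux, if_pos hs]
  simp only [ctilde, hlen]

theorem ctilde_of_not_isPrefix_sample (h : u.length < n) (hs : ¬ ∃ s ∈ S, u <+: s) :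
    ctilde n P L S u = {t | inPrefix L t}.indicator (fun _ => 1) u := by
  rw [ctilde, show n - u.length = n - (u.length + 1) + 1 by omega, ctildeAux, if_neg hs]

end ASAp

section Mass

theorem finsum_mem_XS_eq_sum_snoc (hL : ∀ w ∈ L, w.length = n) (hs : ∃ s ∈ S, u <+: s)
    (f : List α → ℝ) :
    ∑ᶠ t ∈ XS L S u, f t = ∑ a : α, ∑ᶠ t ∈ XS L S (u ++ [a]), f t := by
  rw [XS_eq_iUnion_snoc hs,
    finsum_mem_iUnion pairwise_disjoint_XS_snoc fun _ => XS_finite hL, finsum_eq_sum_of_fintype]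

theorem finsum_mem_XS_marg_of_not_isPrefix_sample (hs : ¬ ∃ s ∈ S, u <+: s) :
    ∑ᶠ t ∈ XS L S u, marg n P t =
      ∑ v : Fin (n - u.length) → α,
        {x | ∃ t ∈ XS L S u, t <+: x}.indicator P (u ++ List.ofFn v) := by
  by_cases hu : inPrefix L u
  · rw [XS_eq_singleton_self hs hu, finsum_mem_singleton, marg]
    exact Finset.sum_congr rfl fun v _ =>
      (Set.indicator_of_mem (s := {x | ∃ t ∈ ({u} : Set (List α)), t <+: x})
        ⟨u, rfl, u.prefix_append _⟩ P).symm
  · simp [XS_eq_empty_of_not_inPrefix hu]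

theorem finsum_mem_XS_marg (hL : ∀ w ∈ L, w.length = n) (u : List α) :
    ∑ᶠ t ∈ XS L S u, marg n P t =
      ∑ v : Fin (n - u.length) → α,
        {x | ∃ t ∈ XS L S u, t <+: x}.indicator P (u ++ List.ofFn v) := by
  induction u using induction_on_remaining_length (n := n) with
  | base u h =>
    by_cases hs : ∃ s ∈ S, u <+: s
    · simp [XS_eq_empty_of_le_length hL hs h]
    · exact finsum_mem_XS_marg_of_not_isPrefix_sample hs
  | step u h ih =>
    by_cases hs : ∃ s ∈ S, u <+: s
    · rw [finsum_mem_XS_eq_sum_snoc hL hs, sum_completions_eq_sum_snoc _ h]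
      refine Finset.sum_congr rfl fun a _ => (ih a).trans (Finset.sum_congr rfl fun v _ => ?_)
      classical
      simp only [Set.indicator_apply, Set.mem_ofPred_eq,
        exists_mem_XS_isPrefix_iff_snoc hs (List.prefix_append (u ++ [a]) _)]
    · exact finsum_mem_XS_marg_of_not_isPrefix_sample hs

end Mass

theorem ctilde_sub_efg_le (hP : ∀ w, 0 ≤ P w) (hL : ∀ w ∈ L, w.length = n)
    (hmarg : ∀ v : List α, v.length ≤ n → 0 < marg n P v) (u : List α) :
    ctilde n P L S u - efg n P L u ≤ (∑ᶠ t ∈ XS L S u, marg n P t) / marg n P u := by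
  induction u using induction_on_remaining_length (n := n) with
  | base u h =>
    rw [ctilde_of_le_length h, efg_of_le_length hL hmarg h, sub_self]
    exact div_nonneg (finsum_nonneg fun t => finsum_nonneg fun _ => marg_nonneg hP t)
      (marg_nonneg hP u)
  | step u h ih =>
    by_cases hs : ∃ s ∈ S, u <+: s
    · calc ctilde n P L S u - efg n P L u
          = ∑ a : α, cond n P u a * (ctilde n P L S (u ++ [a]) - efg n P L (u ++ [a])) := by
            rw [ctilde_of_isPrefix_sample h hs, efg_eq_sum_cond_mul_snoc hmarg h,
              ← Finset.sum_sub_distrib]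
            simp only [mul_sub]
        _ ≤ ∑ a : α, cond n P u a *
              ((∑ᶠ t ∈ XS L S (u ++ [a]), marg n P t) / marg n P (u ++ [a])) :=
            Finset.sum_le_sum fun a _ => mul_le_mul_of_nonneg_left (ih a) (cond_nonneg hP u a)
        _ = ∑ a : α, (∑ᶠ t ∈ XS L S (u ++ [a]), marg n P t) / marg n P u :=
            Finset.sum_congr rfl fun a _ =>
              cond_mul_div_marg_snoc (hmarg _ (by simpa using h)).ne' _
        _ = (∑ᶠ t ∈ XS L S u, marg n P t) / marg n P u := by
            rw [← Finset.sum_div, finsum_mem_XS_eq_sum_snoc hL hs]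
    · by_cases hu : inPrefix L u
      · rw [ctilde_of_not_isPrefix_sample h hs,
          Set.indicator_of_mem (s := {t | inPrefix L t}) hu, XS_eq_singleton_self hs hu,
          finsum_mem_singleton, div_self (hmarg u h.le).ne']
        linarith [efg_nonneg (n := n) (L := L) hP u]
      · rw [ctilde_of_not_isPrefix_sample h hs,
          Set.indicator_of_notMem (s := {t | inPrefix L t}) hu, efg_eq_zero_of_not_inPrefix hu,
          XS_eq_empty_of_not_inPrefix hu]
        simp

theorem ctilde_eq_efg_of_forall_mem_sample (hL : ∀ w ∈ L, w.length = n)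
    (hmarg : ∀ v : List α, v.length ≤ n → 0 < marg n P v) (u : List α) :
    (∀ t ∈ L, u <+: t → t ∈ S) → ctilde n P L S u = efg n P L u := by
  induction u using induction_on_remaining_length (n := n) with
  | base u h =>
    intro _
    rw [ctilde_of_le_length h, efg_of_le_length hL hmarg h]
  | step u h ih =>
    intro hcover
    by_cases hs : ∃ s ∈ S, u <+: s
    · rw [ctilde_of_isPrefix_sample h hs, efg_eq_sum_cond_mul_snoc hmarg h]
      refine Finset.sum_congr rfl fun a _ => ?_
      rw [ih a fun t ht hut => hcover t ht ((u.prefix_append _).trans hut)]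
    · have hu : ¬ inPrefix L u := fun ⟨v, hv⟩ =>
        hs ⟨_, hcover _ hv (u.prefix_append v), u.prefix_append v⟩
      rw [ctilde_of_not_isPrefix_sample h hs,
        Set.indicator_of_notMem (s := {t | inPrefix L t}) hu, efg_eq_zero_of_not_inPrefix hu]

end

theorem stmt7_general {α : Type*} [Fintype α] (n : ℕ) (P : List α → ℝ) (L : Set (List α))
    (hP : ∀ w, 0 ≤ P w) (hL : ∀ w ∈ L, w.length = n)
    (S : Finset (List α))
    (hmarg : ∀ v : List α, v.length ≤ n → 0 < marg n P v)
    (u : List α) :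
    ctilde n P L S u - efg n P L u ≤ (∑ᶠ t ∈ XS L S u, marg n P t / marg n P u) ∧
    (∑ᶠ t ∈ XS L S u, marg n P t / marg n P u) ≤
      (∑ v : Fin (n - u.length) → α,
          Set.indicator {x | ∃ t ∈ XS L S u, t <+: x} P (u ++ List.ofFn v)) / marg n P u ∧
    ((∀ t ∈ L, u <+: t → t ∈ S) → ctilde n P L S u = efg n P L u) := by
  have hdiv : ∑ᶠ t ∈ XS L S u, marg n P t / marg n P u =
      (∑ᶠ t ∈ XS L S u, marg n P t) / marg n P u := by
    simp only [div_eq_mul_inv, finsum_mem_mul]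
  refine ⟨hdiv ▸ ctilde_sub_efg_le hP hL hmarg u, ?_,
    ctilde_eq_efg_of_forall_mem_sample hL hmarg u⟩
  rw [hdiv, finsum_mem_XS_marg hL u]

/-- `c̃_S(u) − c(u)` is at most the total conditional mass of the unexplored
antichain `X_S(u)`, which is at most the probability that a `P`-completion of `u` reaches
some prefix in `X_S(u)`; and if every string of `L` extending `u` is in `S`, then
`c̃_S(u) = c(u)`. -/
theorem stmt7 {α : Type*} [Fintype α] (n : ℕ) (P : List α → ℝ) (L : Set (List α))
    (hP : ∀ w, 0 ≤ P w) (hL : ∀ w ∈ L, w.length = n)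
    (S : Finset (List α)) (hS : ↑S ⊆ L)
    (hmarg : ∀ v : List α, v.length ≤ n → 0 < marg n P v)
    (u : List α) (hu : u.length ≤ n) :
    ctilde n P L S u - efg n P L u ≤ (∑ᶠ t ∈ XS L S u, marg n P t / marg n P u) ∧
    (∑ᶠ t ∈ XS L S u, marg n P t / marg n P u) ≤
      (∑ v : Fin (n - u.length) → α,
          Set.indicator {x | ∃ t ∈ XS L S u, t <+: x} P (u ++ List.ofFn v)) / marg n P u ∧
    ((∀ t ∈ L, u <+: t → t ∈ S) → ctilde n P L S u = efg n P L u) :=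
  stmt7_general n P L hP hL S hmarg u

end GAD
end

section
/- If every string in L appears in the sample set S (i.e., L ⊆ S), then c̃_S = c on all prefixes in L_prefix, and consequently the ASAp sampling distribution Q̃_S, defined by left-to-right conditionals Q̃_S(w_i | w_{1:i-1}) = P(w_i | w_{1:i-1})·c̃_S(w_{1:i}) / Σ_{w'} P(w' | w_{1:i-1})·c̃_S(w_{1:i-1}w'), equals the exact grammar-aligned distribution Q. -/
/-!
On a prefix `u` of a string of `L`, the recursion defining `c̃_S` takes its expanding branch as
soon as `L ⊆ S`, and there it is the one-step decomposition `c(u) = Σ_a P(a | u) c(ua)` satisfied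
by the exact expected future grammaticality; off the prefixes of `L` both sides vanish. Once
`c̃_S = c`, the `i`-th factor of `Q̃_S(w)` is `P_L(w_{1:i+1}) / P_L(w_{1:i})`, where `P_L(u)` is the
mass of the completions of `u` lying in `L`, and the product telescopes to `P_L(w) / P(L) = Q(w)`.
The telescoping survives zero factors because `P_L` stays zero along `w` once it vanishes.
-/

open scoped BigOperators
open Finset Filter

namespace GAD

/-- The ASAp sampling distribution `Q̃_S`, as a product of reweighted left-to-right conditionals. -/
noncomputable def QtildeS {α : Type*} [Fintype α] (n : ℕ) (P : List α → ℝ) (L : Set (List α))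
    (S : Finset (List α)) (w : Fin n → α) : ℝ :=
  ∏ i : Fin n,
    cond n P ((List.ofFn w).take i) (w i) * ctilde n P L S ((List.ofFn w).take i ++ [w i]) /
      ∑ a : α, cond n P ((List.ofFn w).take i) a * ctilde n P L S ((List.ofFn w).take i ++ [a])

section

variable {α : Type*}

theorem take_ofFn_add_one {n : ℕ} (w : Fin n → α) (i : Fin n) :
    (List.ofFn w).take (i + 1) = (List.ofFn w).take i ++ [w i] := by
  simp [List.take_add_one]

variable [Fintype α]

theorem sum_ofFn_succ {M : Type*} [AddCommMonoid M] (f : List α → M) (k : ℕ) :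
    ∑ v : Fin (k + 1) → α, f (List.ofFn v) = ∑ a, ∑ v : Fin k → α, f (a :: List.ofFn v) := by
  rw [← (Fin.consEquiv fun _ => α).sum_comp, Fintype.sum_prod_type]
  simp [Fin.consEquiv, List.ofFn_succ]

theorem margL_eq_sum_append_singleton (n : ℕ) (P : List α → ℝ) (L : Set (List α)) {u : List α}
    (hu : u.length < n) : margL n P L u = ∑ a, margL n P L (u ++ [a]) := by
  obtain ⟨k, hk⟩ : ∃ k, n - u.length = k + 1 := ⟨n - u.length - 1, by omega⟩
  rw [margL, hk, sum_ofFn_succ (fun v => L.indicator P (u ++ v))]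
  refine Finset.sum_congr rfl fun a _ => ?_
  rw [margL, show n - (u ++ [a]).length = k by simp; omega]
  simp

theorem margL_of_length_eq (n : ℕ) (P : List α → ℝ) (L : Set (List α)) {u : List α}
    (hu : u.length = n) : margL n P L u = L.indicator P u := by
  rw [margL, hu, Nat.sub_self]
  simp

theorem marg_of_length_eq (n : ℕ) (P : List α → ℝ) {u : List α}
    (hu : u.length = n) : marg n P u = P u := by
  rw [marg, hu, Nat.sub_self]
  simp

theorem margL_nonneg (n : ℕ) {P : List α → ℝ} (L : Set (List α)) (hP : ∀ w, 0 ≤ P w)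
    (u : List α) : 0 ≤ margL n P L u :=
  Finset.sum_nonneg fun _ _ => Set.indicator_nonneg (fun w _ => hP w) _

theorem margL_eq_zero_of_not_inPrefix (n : ℕ) (P : List α → ℝ) {L : Set (List α)} {u : List α}
    (hu : ¬ inPrefix L u) : margL n P L u = 0 :=
  Finset.sum_eq_zero fun v _ => Set.indicator_of_notMem (fun h => hu ⟨List.ofFn v, h⟩) _

theorem margL_append_singleton_eq_zero {n : ℕ} {P : List α → ℝ} {L : Set (List α)}
    (hP : ∀ w, 0 ≤ P w) {u : List α} (hu : u.length < n) (h : margL n P L u = 0) (a : α) :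
    margL n P L (u ++ [a]) = 0 := by
  rw [margL_eq_sum_append_singleton n P L hu] at h
  exact (Finset.sum_eq_zero_iff_of_nonneg fun b _ => margL_nonneg n L hP _).1 h a
    (Finset.mem_univ a)

theorem cond_mul_efg_append_singleton {n : ℕ} {P : List α → ℝ} (L : Set (List α))
    {u : List α} (a : α) (ha : marg n P (u ++ [a]) ≠ 0) :
    cond n P u a * efg n P L (u ++ [a]) = margL n P L (u ++ [a]) / marg n P u := by
  rw [cond, efg, mul_comm, div_mul_div_cancel₀ ha]

theorem sum_cond_mul_efg {n : ℕ} {P : List α → ℝ} (L : Set (List α))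
    (hmarg : ∀ u : List α, u.length ≤ n → 0 < marg n P u) {u : List α} (hu : u.length < n) :
    ∑ a, cond n P u a * efg n P L (u ++ [a]) = efg n P L u := by
  have hpos : ∀ a : α, marg n P (u ++ [a]) ≠ 0 := fun a => (hmarg _ (by simp; omega)).ne'
  rw [Finset.sum_congr rfl fun a _ => cond_mul_efg_append_singleton L a (hpos a),
    ← Finset.sum_div, ← margL_eq_sum_append_singleton n P L hu, efg]

theorem ctildeAux_eq_efg {n : ℕ} {P : List α → ℝ} {L : Set (List α)} {S : Finset (List α)}
    (hLS : ∀ w ∈ L, w ∈ S) (hmarg : ∀ u : List α, u.length ≤ n → 0 < marg n P u) :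
    ∀ k (u : List α), u.length + k = n → ctildeAux n P L S k u = efg n P L u
  | 0, u, hu => by
    have hPu : P u ≠ 0 := marg_of_length_eq n P hu ▸ (hmarg u hu.le).ne'
    rw [ctildeAux, efg, margL_of_length_eq n P L hu, marg_of_length_eq n P hu]
    by_cases huL : u ∈ L
    · simp [huL, hPu]
    · simp [huL]
  | k + 1, u, hu => by
    rw [ctildeAux]
    split_ifs with hS
    · simp only [ctildeAux_eq_efg hLS hmarg k (u ++ [_]) (by simp; omega)]
      exact sum_cond_mul_efg L hmarg (by omega)
    · have hu : ¬ inPrefix L u := fun ⟨v, hv⟩ => hS ⟨u ++ v, hLS _ hv, v, rfl⟩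
      rw [efg, margL_eq_zero_of_not_inPrefix n P hu, zero_div]
      exact Set.indicator_of_notMem (s := {t | inPrefix L t}) hu _

theorem ctilde_eq_efg {n : ℕ} {P : List α → ℝ} {L : Set (List α)} {S : Finset (List α)}
    (hLS : ∀ w ∈ L, w ∈ S) (hmarg : ∀ u : List α, u.length ≤ n → 0 < marg n P u)
    {u : List α} (hu : u.length ≤ n) : ctilde n P L S u = efg n P L u :=
  ctildeAux_eq_efg hLS hmarg _ u (by omega)

theorem cond_mul_ctilde_div_sum_eq_margL_div {n : ℕ} {P : List α → ℝ} {L : Set (List α)}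
    {S : Finset (List α)} (hLS : ∀ w ∈ L, w ∈ S)
    (hmarg : ∀ u : List α, u.length ≤ n → 0 < marg n P u) {u : List α} (hu : u.length < n)
    (a : α) :
    cond n P u a * ctilde n P L S (u ++ [a]) / ∑ b, cond n P u b * ctilde n P L S (u ++ [b]) =
      margL n P L (u ++ [a]) / margL n P L u := by
  have hlen : ∀ b : α, (u ++ [b]).length ≤ n := fun b => by simp; omega
  simp only [ctilde_eq_efg hLS hmarg (hlen _), sum_cond_mul_efg L hmarg hu]
  rw [cond_mul_efg_append_singleton L a (hmarg _ (hlen a)).ne', efg,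
    div_div_div_cancel_right₀ (hmarg u hu.le).ne']

theorem prod_range_div_telescope {K : Type*} [CommGroupWithZero K] (g : ℕ → K) (n : ℕ)
    (h0 : g 0 ≠ 0) (hzero : ∀ i < n, g i = 0 → g (i + 1) = 0) :
    ∏ i ∈ Finset.range n, g (i + 1) / g i = g n / g 0 := by
  induction n with
  | zero => simp [h0]
  | succ n ih =>
    rw [Finset.prod_range_succ, ih fun i hi => hzero i (by omega)]
    by_cases hn : g n = 0
    · simp [hn, hzero n (by omega) hn]
    · rw [mul_comm, div_mul_div_cancel₀ hn]

end

theorem stmt8_general {α : Type*} [Fintype α] (n : ℕ) (P : List α → ℝ) (L : Set (List α))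
    (hP : ∀ w, 0 ≤ P w) (hPL : 0 < PL n P L)
    (S : Finset (List α)) (hLS : ∀ w ∈ L, w ∈ S)
    (hmarg : ∀ u : List α, u.length ≤ n → 0 < marg n P u) :
    (∀ u : List α, inPrefix L u → u.length ≤ n → ctilde n P L S u = efg n P L u) ∧
    (∀ w : Fin n → α, QtildeS n P L S w = L.indicator P (List.ofFn w) / PL n P L) := by
  refine ⟨fun u _ hu => ctilde_eq_efg hLS hmarg hu, fun w => ?_⟩
  set g : ℕ → ℝ := fun i => margL n P L ((List.ofFn w).take i)
  have hfactor : ∀ i : Fin n,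
      cond n P ((List.ofFn w).take i) (w i) * ctilde n P L S ((List.ofFn w).take i ++ [w i]) /
        ∑ a, cond n P ((List.ofFn w).take i) a * ctilde n P L S ((List.ofFn w).take i ++ [a]) =
      g (i + 1) / g i := fun i => by
    rw [cond_mul_ctilde_div_sum_eq_margL_div hLS hmarg (by simp) (w i), ← take_ofFn_add_one]
  have hzero : ∀ i < n, g i = 0 → g (i + 1) = 0 := fun i hi h0 => by
    simpa only [g, take_ofFn_add_one w ⟨i, hi⟩] using
      margL_append_singleton_eq_zero hP (by simpa using hi) h0 (w ⟨i, hi⟩)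
  rw [QtildeS, Finset.prod_congr rfl fun i _ => hfactor i,
    Fin.prod_univ_eq_prod_range (fun i => g (i + 1) / g i),
    prod_range_div_telescope g n hPL.ne' hzero]
  have htake : (List.ofFn w).take n = List.ofFn w := List.take_of_length_le (by simp)
  simp [g, htake, margL_of_length_eq, PL]

/-- If every string of `L` is in the sample set `S`, then `c̃_S = c` on all
prefixes of `L`, and consequently the ASAp sampling distribution `Q̃_S` equals the exact
grammar-aligned distribution `Q = P(· | L)`. -/
theorem stmt8 {α : Type*} [Fintype α] (n : ℕ) (P : List α → ℝ) (L : Set (List α))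
    (hP : ∀ w, 0 ≤ P w) (hL : ∀ w ∈ L, w.length = n) (hPL : 0 < PL n P L)
    (hpos : ∀ w ∈ L, 0 < P w)
    (S : Finset (List α)) (hSL : ∀ w ∈ S, w ∈ L) (hLS : ∀ w ∈ L, w ∈ S)
    (hmarg : ∀ u : List α, u.length ≤ n → 0 < marg n P u) :
    (∀ u : List α, inPrefix L u → u.length ≤ n → ctilde n P L S u = efg n P L u) ∧
    (∀ w : Fin n → α, QtildeS n P L S w = L.indicator P (List.ofFn w) / PL n P L) :=
  stmt8_general n P L hP hPL S hLS hmarg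

end GAD
end
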